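/- arXiv:1603.09702 — 4 statements merged into one kernel-verified Lean document; each statement's English description precedes it below -/
import Mathlib

section
/- Let g : (0,∞) → (0,∞) be differentiable with lim_{x→∞} g'(x)x/g(x) = 1−λ for some λ > 0. Then for every μ < λ, g(x) = O(x^{1−μ}) as x → ∞, i.e. there exist constants C > 0 and M > 0 such that g(x) ≤ C x^{1−μ} for all x > M. -/
/-! Since `1 - lam < 1 - μ'`, eventually `g' x * x < (1 - μ') * g x`; from there on the quotient
`g x / x ^ (1 - μ')` has nonpositive derivative, so it stays below its initial value. -/

open Filter Set

theorem antitoneOn_div_rpow_of_deriv_mul_le {g g' : ℝ → ℝ} {a M : ℝ} (hM : 0 < M)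
    (hderiv : ∀ x ≥ M, HasDerivAt g (g' x) x) (hle : ∀ x ≥ M, g' x * x ≤ a * g x) :
    AntitoneOn (fun x => g x / x ^ a) (Ici M) := by
  have hquot : ∀ x ≥ M, HasDerivAt (fun x => g x / x ^ a)
      ((g' x * x ^ a - g x * (a * x ^ (a - 1))) / (x ^ a) ^ 2) x := fun x hx =>
    (hderiv x hx).div (Real.hasDerivAt_rpow_const (Or.inl (hM.trans_le hx).ne'))
      (Real.rpow_pos_of_pos (hM.trans_le hx) a).ne'
  refine antitoneOn_of_hasDerivWithinAt_nonpos (convex_Ici M)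
    (fun x hx => (hquot x hx).continuousAt.continuousWithinAt)
    (fun x hx => (hquot x (interior_subset hx)).hasDerivWithinAt) fun x hx => ?_
  have hx : M ≤ x := interior_subset hx
  have hx0 : 0 < x := hM.trans_le hx
  have hnum : g' x * x ^ a - g x * (a * x ^ (a - 1)) = x ^ a / x * (g' x * x - a * g x) := by
    rw [Real.rpow_sub_one hx0.ne']
    field_simp
  rw [hnum]
  refine div_nonpos_of_nonpos_of_nonneg (mul_nonpos_of_nonneg_of_nonpos ?_ ?_) (sq_nonneg _)
  · exact (div_pos (Real.rpow_pos_of_pos hx0 a) hx0).le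
  · linarith [hle x hx]

theorem le_mul_rpow_of_deriv_mul_le {g g' : ℝ → ℝ} {a M : ℝ} (hM : 0 < M)
    (hderiv : ∀ x ≥ M, HasDerivAt g (g' x) x) (hle : ∀ x ≥ M, g' x * x ≤ a * g x)
    {x : ℝ} (hx : M ≤ x) : g x ≤ g M / M ^ a * x ^ a :=
  (div_le_iff₀ (Real.rpow_pos_of_pos (hM.trans_le hx) a)).1 <|
    antitoneOn_div_rpow_of_deriv_mul_le hM hderiv hle self_mem_Ici hx hx

theorem eventually_deriv_mul_le {g g' : ℝ → ℝ} {L a : ℝ} (hLa : L < a)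
    (hg : ∀ᶠ x in atTop, 0 < g x)
    (hlim : Tendsto (fun x => g' x * x / g x) atTop (nhds L)) :
    ∀ᶠ x in atTop, g' x * x ≤ a * g x := by
  filter_upwards [hg, hlim.eventually (gt_mem_nhds hLa)] with x hgx hx
  exact ((div_lt_iff₀ hgx).1 hx).le

theorem g_bigO_of_deriv_limit_general (g g' : ℝ → ℝ) (lam : ℝ)
    (hg : ∀ x > (0:ℝ), 0 < g x)
    (hderiv : ∀ x > (0:ℝ), HasDerivAt g (g' x) x)
    (hlim : Filter.Tendsto (fun x => g' x * x / g x) Filter.atTop (nhds (1 - lam))) :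
    ∀ μ' < lam, ∃ C > (0:ℝ), ∃ M > (0:ℝ), ∀ x > M, g x ≤ C * x ^ (1 - μ') := by
  intro μ' hμ'
  have hgpos : ∀ᶠ x in atTop, 0 < g x := (eventually_gt_atTop 0).mono hg
  obtain ⟨M, hM⟩ := ((eventually_deriv_mul_le (a := 1 - μ') (by linarith) hgpos hlim).and
    (eventually_gt_atTop 0)).exists_forall_of_atTop
  have hM0 : 0 < M := (hM M le_rfl).2
  exact ⟨_, div_pos (hg M hM0) (Real.rpow_pos_of_pos hM0 _), M, hM0, fun _ hx =>
    le_mul_rpow_of_deriv_mul_le hM0 (fun x hx => hderiv x (hM x hx).2)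
      (fun x hx => (hM x hx).1) hx.le⟩

theorem g_bigO_of_deriv_limit (g g' : ℝ → ℝ) (lam : ℝ) (hlam : 0 < lam)
    (hg : ∀ x > (0:ℝ), 0 < g x)
    (hderiv : ∀ x > (0:ℝ), HasDerivAt g (g' x) x)
    (hlim : Filter.Tendsto (fun x => g' x * x / g x) Filter.atTop (nhds (1 - lam))) :
    ∀ μ' < lam, ∃ C > (0:ℝ), ∃ M > (0:ℝ), ∀ x > M, g x ≤ C * x ^ (1 - μ') :=
  g_bigO_of_deriv_limit_general g g' lam hg hderiv hlim
end

section
/- Let g : [1,∞) → (0,∞) be continuous and differentiable with lim_{x→∞} g'(x)x/g(x) = 1−λ for some λ > 0, and let G(x) = ∫₁^x dy/g(y). Define ℓ_α(x) = (G⁻¹(x))^α. If 0 < α < λ, then ℓ_α is concave on [x₀,∞) for some x₀ > 0. -/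
open Set Filter MeasureTheory intervalIntegral

theorem ell_alpha_ultimately_concave (g G Ginv : ℝ → ℝ) (lam α : ℝ)
    (hlam : 0 < lam) (hα : α ∈ Set.Ioo (0:ℝ) lam)
    (hgpos : ∀ x ≥ (1:ℝ), 0 < g x)
    (hgcont : ContinuousOn g (Set.Ici 1))
    (hgdiff : ∀ x ≥ (1:ℝ), DifferentiableAt ℝ g x)
    (hlim : Filter.Tendsto (fun x => deriv g x * x / g x) Filter.atTop (nhds (1 - lam)))
    (hG : ∀ x ≥ (1:ℝ), G x = ∫ y in (1:ℝ)..x, 1 / g y)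
    (hGinvG : ∀ x ≥ (1:ℝ), Ginv (G x) = x)
    (hGGinv : ∀ y ≥ (0:ℝ), 1 ≤ Ginv y ∧ G (Ginv y) = y) :
    ∃ x₀ > (0:ℝ), ConcaveOn ℝ (Set.Ici x₀) (fun x => Ginv x ^ α) := by
  obtain ⟨hα0, hαlam⟩ := hα
  -- eventual bound on the logarithmic derivative
  have hev : ∀ᶠ t in atTop, deriv g t * t / g t < 1 - α :=
    hlim.eventually_lt_const (by linarith)
  obtain ⟨X0, hX0⟩ := Filter.eventually_atTop.mp hev
  set X : ℝ := max X0 2 with hXdef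
  have hX1 : (1:ℝ) ≤ X := le_trans one_le_two (le_max_right _ _)
  have hXbound : ∀ t ≥ X, deriv g t * t / g t < 1 - α :=
    fun t ht => hX0 t (le_trans (le_max_left _ _) ht)
  -- basic integrability
  have hcont1 : ∀ a b : ℝ, 1 ≤ a → 1 ≤ b →
      ContinuousOn (fun y => 1 / g y) (Set.uIcc a b) := by
    intro a b ha hb
    have hsub : Set.uIcc a b ⊆ Set.Ici 1 := fun x hx => le_trans (le_min ha hb) hx.1
    exact continuousOn_const.div (hgcont.mono hsub)
      (fun x hx => ne_of_gt (hgpos x (hsub hx)))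
  have hint : ∀ a b : ℝ, 1 ≤ a → 1 ≤ b →
      IntervalIntegrable (fun y => 1 / g y) volume a b := by
    intro a b ha hb
    exact (hcont1 a b ha hb).intervalIntegrable
  -- G is monotone on [1, ∞)
  have hGmono : MonotoneOn G (Set.Ici 1) := by
    intro a ha b hb hab
    rw [hG a ha, hG b hb, ← intervalIntegral.integral_add_adjacent_intervals
      (hint 1 a le_rfl ha) (hint a b ha (le_trans ha hab))]
    have h2 : 0 ≤ ∫ y in a..b, 1 / g y := by
      apply intervalIntegral.integral_nonneg hab
      intro u hu
      have : (0:ℝ) < g u := hgpos u (le_trans ha hu.1)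
      positivity
    linarith
  have hGnonneg : ∀ x ≥ (1:ℝ), 0 ≤ G x := by
    intro x hx
    rw [hG x hx]
    apply intervalIntegral.integral_nonneg hx
    intro u hu
    have : (0:ℝ) < g u := hgpos u hu.1
    positivity
  have hG1 : G 1 = 0 := by rw [hG 1 le_rfl, intervalIntegral.integral_same]
  have hGinv_gt : ∀ y > (0:ℝ), 1 < Ginv y := by
    intro y hy
    obtain ⟨h1, h2⟩ := hGGinv y hy.le
    rcases eq_or_lt_of_le h1 with he | hlt
    · exfalso; rw [← he, hG1] at h2; linarith
    · exact hlt
  -- Ginv is strictly monotone on [0, ∞)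
  have hsm : StrictMonoOn Ginv (Set.Ici 0) := by
    intro a ha b hb hab
    by_contra h
    push_neg at h
    have h1 : G (Ginv b) ≤ G (Ginv a) :=
      hGmono (hGGinv b hb).1 (hGGinv a ha).1 h
    rw [(hGGinv a ha).2, (hGGinv b hb).2] at h1
    linarith
  -- the derivative of Ginv
  have hDG : ∀ y > (0:ℝ), HasDerivAt Ginv (g (Ginv y)) y := by
    intro y hy
    set t := Ginv y with htdef
    have hty : G t = y := (hGGinv y hy.le).2
    have ht1 : 1 < t := hGinv_gt y hy
    have hgt : 0 < g t := hgpos t ht1.le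
    have hcIoi : ContinuousOn (fun u => 1 / g u) (Set.Ioi 1) :=
      continuousOn_const.div (hgcont.mono Set.Ioi_subset_Ici_self)
        (fun x hx => ne_of_gt (hgpos x (le_of_lt hx)))
    have hcAt : ContinuousAt (fun u => 1 / g u) t := by
      have hg : ContinuousAt g t :=
        (hgcont t ht1.le).continuousAt (Ici_mem_nhds ht1)
      exact continuousAt_const.div hg (ne_of_gt hgt)
    have hFder : HasDerivAt (fun u => ∫ s in (1:ℝ)..u, 1 / g s) (1 / g t) t :=
      intervalIntegral.integral_hasDerivAt_right (hint 1 t le_rfl ht1.le)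
        (hcIoi.stronglyMeasurableAtFilter isOpen_Ioi t ht1) hcAt
    have hGder : HasDerivAt G (1 / g t) t := by
      apply hFder.congr_of_eventuallyEq
      filter_upwards [Ioi_mem_nhds ht1] with u hu
      exact hG u (le_of_lt hu)
    have hcont : ContinuousAt Ginv y := by
      apply hsm.continuousAt_of_exists_between (Ici_mem_nhds hy)
      · intro b hb
        refine ⟨G (max 1 b), hGnonneg _ (le_max_left _ _), ?_⟩
        rw [hGinvG _ (le_max_left _ _)]
        exact ⟨le_max_right _ _, max_lt ht1 hb⟩
      · intro b hb
        have hb1 : (1:ℝ) ≤ b := le_trans ht1.le (le_of_lt hb)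
        refine ⟨G b, hGnonneg b hb1, ?_⟩
        rw [hGinvG b hb1]
        exact ⟨hb, le_rfl⟩
    have hfg : ∀ᶠ u in nhds y, G (Ginv u) = u := by
      filter_upwards [Ioi_mem_nhds hy] with u hu
      exact (hGGinv u (le_of_lt hu)).2
    have h := HasDerivAt.of_local_left_inverse hcont hGder
      (one_div_ne_zero (ne_of_gt hgt)) hfg
    rwa [one_div, inv_inv] at h
  -- set x₀
  have hGX0 : 0 ≤ G X := hGnonneg X hX1
  refine ⟨G X + 1, by linarith, ?_⟩
  have hx₀1 : (1:ℝ) ≤ G X + 1 := by linarith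
  have hXle : ∀ y ≥ G X + 1, X ≤ Ginv y := by
    intro y hy
    have hy0 : (0:ℝ) ≤ y := by linarith
    by_contra h
    push_neg at h
    have h1 : G (Ginv y) ≤ G X := hGmono (hGGinv y hy0).1 hX1 h.le
    rw [(hGGinv y hy0).2] at h1
    linarith
  -- the first and second derivative candidates
  refine concaveOn_of_hasDerivWithinAt2_nonpos (convex_Ici _)
    (f' := fun y => g (Ginv y) * α * Ginv y ^ (α - 1))
    (f'' := fun y => deriv g (Ginv y) * g (Ginv y) * α * Ginv y ^ (α - 1) +
      g (Ginv y) * α * (g (Ginv y) * (α - 1) * Ginv y ^ (α - 1 - 1)))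
    ?_ ?_ ?_ ?_
  · -- continuity
    intro y hy
    have hy0 : (0:ℝ) < y := by have := mem_Ici.mp hy; linarith
    have ht0 : Ginv y ≠ 0 := by have := hGinv_gt y hy0; linarith
    exact (((hDG y hy0).rpow_const (Or.inl ht0)).continuousAt).continuousWithinAt
  · -- first derivative
    intro y hy
    rw [interior_Ici] at hy
    have hy0 : (0:ℝ) < y := by have := mem_Ioi.mp hy; linarith
    have ht0 : Ginv y ≠ 0 := by have := hGinv_gt y hy0; linarith
    exact ((hDG y hy0).rpow_const (Or.inl ht0)).hasDerivWithinAt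
  · -- second derivative
    intro y hy
    rw [interior_Ici] at hy
    have hy0 : (0:ℝ) < y := by have := mem_Ioi.mp hy; linarith
    have ht1 : 1 < Ginv y := hGinv_gt y hy0
    have ht0 : Ginv y ≠ 0 := by linarith
    have h1 : HasDerivAt (fun x => g (Ginv x) * α)
        (deriv g (Ginv y) * g (Ginv y) * α) y :=
      (((hgdiff _ ht1.le).hasDerivAt.comp y (hDG y hy0))).mul_const α
    have h2 : HasDerivAt (fun x => Ginv x ^ (α - 1))
        (g (Ginv y) * (α - 1) * Ginv y ^ (α - 1 - 1)) y :=
      (hDG y hy0).rpow_const (Or.inl ht0)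
    have h3 := h1.mul h2
    exact h3.hasDerivWithinAt
  · -- sign of the second derivative
    intro y hy
    rw [interior_Ici] at hy
    have hy0 : (0:ℝ) < y := by have := mem_Ioi.mp hy; linarith
    show deriv g (Ginv y) * g (Ginv y) * α * Ginv y ^ (α - 1) +
      g (Ginv y) * α * (g (Ginv y) * (α - 1) * Ginv y ^ (α - 1 - 1)) ≤ 0
    set t := Ginv y with htdef
    have ht1 : 1 < t := hGinv_gt y hy0
    have htp : (0:ℝ) < t := by linarith
    have hgt : 0 < g t := hgpos t ht1.le
    have htX : X ≤ t := hXle y (le_of_lt (mem_Ioi.mp hy))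
    have key : deriv g t * t / g t < 1 - α := hXbound t htX
    have key2 : deriv g t * t < (1 - α) * g t := (div_lt_iff₀ hgt).mp key
    have hneg : deriv g t * t + (α - 1) * g t < 0 := by linarith
    have hE : (0:ℝ) < t ^ (α - 1 - 1) := Real.rpow_pos_of_pos htp _
    have hB : t ^ (α - 1) = t ^ (α - 1 - 1) * t := by
      rw [← Real.rpow_add_one (ne_of_gt htp) (α - 1 - 1)]
      congr 1
      ring
    have hpos : 0 < α * g t * t ^ (α - 1 - 1) := by positivity
    have : deriv g t * g t * α * t ^ (α - 1) +
        g t * α * (g t * (α - 1) * t ^ (α - 1 - 1)) =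
        (α * g t * t ^ (α - 1 - 1)) * (deriv g t * t + (α - 1) * g t) := by
      rw [hB]; ring
    rw [this]
    exact (mul_neg_of_pos_of_neg hpos hneg).le
end

section
/- Let g : [1,∞) → (0,∞) be continuous and differentiable with lim_{x→∞} g'(x)x/g(x) = 1−λ for some λ > 0, and let G(x) = ∫₁^x dy/g(y) with inverse G⁻¹. Define ℓ_α(x) = (G⁻¹(x))^α. If α > λ, then ℓ_α is convex on [x₀,∞) for some x₀ > 0. -/
/-!
Writing `u = G⁻¹ x`, the inverse function rule gives `(G⁻¹)' x = g u`, hence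
`ℓ_α' x = α u ^ (α - 1) g u`. Since `G⁻¹` is increasing, `ℓ_α` is convex as soon as
`u ↦ u ^ (α - 1) g u` is increasing for large `u`. Its derivative is
`u ^ (α - 2) ((α - 1) g u + u g' u)`, and `u g' u / g u → 1 - λ > 1 - α` makes the bracket
eventually positive.
-/

open Set Filter Topology intervalIntegral MeasureTheory

section Primitive

variable {f G : ℝ → ℝ} {a : ℝ}

lemma strictMonoOn_Ici_of_eqOn_integral (hf : ContinuousOn f (Ici a)) (hpos : ∀ x ≥ a, 0 < f x)
    (hG : EqOn G (fun x => ∫ y in a..x, f y) (Ici a)) : StrictMonoOn G (Ici a) := by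
  intro x (hx : a ≤ x) y (hy : a ≤ y) hxy
  have hint : ∀ b ≥ a, ∀ c ≥ a, IntervalIntegrable f volume b c := fun b hb c hc =>
    (hf.mono (ordConnected_Ici.uIcc_subset hb hc)).intervalIntegrable
  have hdiff := integral_interval_sub_left (hint a le_rfl y hy) (hint a le_rfl x hx)
  have hpos' : 0 < ∫ t in x..y, f t :=
    intervalIntegral_pos_of_pos_on (hint x hx y hy) (fun t ht => hpos t (hx.trans ht.1.le)) hxy
  rw [hG hx, hG hy]
  linarith

lemma hasDerivAt_of_eqOn_integral (hf : ContinuousOn f (Ici a))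
    (hG : EqOn G (fun x => ∫ y in a..x, f y) (Ici a)) {u : ℝ} (hu : a < u) :
    HasDerivAt G (f u) u := by
  have hint : HasDerivAt (fun x => ∫ y in a..x, f y) (f u) u :=
    integral_hasDerivAt_right ((hf.mono Icc_subset_Ici_self).intervalIntegrable_of_Icc hu.le)
      ((hf.mono Ioi_subset_Ici_self).stronglyMeasurableAtFilter isOpen_Ioi u hu)
      (hf.continuousAt (Ici_mem_nhds hu))
  exact hint.congr_of_eventuallyEq (eventually_of_mem (Ici_mem_nhds hu) hG)

end Primitive

section Inverse

variable {G Ginv : ℝ → ℝ} {s t : Set ℝ}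

lemma StrictMonoOn.strictMonoOn_of_leftInvOn (hG : StrictMonoOn G s) (hmaps : MapsTo Ginv t s)
    (hinv : LeftInvOn G Ginv t) : StrictMonoOn Ginv t := fun x hx y hy hxy =>
  (hG.lt_iff_lt (hmaps hx) (hmaps hy)).1 (by rwa [hinv hx, hinv hy])

lemma StrictMonoOn.hasDerivAt_of_leftInvOn (hG : StrictMonoOn G s) (hGmaps : MapsTo G s t)
    (hmaps : MapsTo Ginv t s) (hinv : LeftInvOn G Ginv t) {x G' : ℝ} (hx : t ∈ 𝓝 x)
    (hGinvx : s ∈ 𝓝 (Ginv x)) (hGder : HasDerivAt G G' (Ginv x)) (hG' : G' ≠ 0) :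
    HasDerivAt Ginv G'⁻¹ x := by
  have himage : s ⊆ Ginv '' t := fun u hu =>
    ⟨G u, hGmaps hu, hG.injOn.rightInvOn_of_leftInvOn hinv hGmaps hmaps hu⟩
  have hcont : ContinuousAt Ginv x :=
    (hG.strictMonoOn_of_leftInvOn hmaps hinv).continuousAt_of_image_mem_nhds hx
      (mem_of_superset hGinvx himage)
  exact hGder.of_local_left_inverse hcont hG' (eventually_of_mem hx hinv)

end Inverse

section PowerTimes

variable {g : ℝ → ℝ} {β : ℝ}

lemma hasDerivAt_rpow_mul {u : ℝ} (hu : 0 < u) (hg : DifferentiableAt ℝ g u) :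
    HasDerivAt (fun v => v ^ β * g v) (u ^ (β - 1) * (β * g u + u * deriv g u)) u := by
  refine ((Real.hasDerivAt_rpow_const (Or.inl hu.ne')).mul hg.hasDerivAt).congr_deriv ?_
  rw [Real.rpow_sub_one hu.ne']
  field_simp

lemma monotoneOn_rpow_mul {M : ℝ} (hM : 0 < M) (hg : ∀ u ≥ M, DifferentiableAt ℝ g u)
    (hnonneg : ∀ u ≥ M, 0 ≤ β * g u + u * deriv g u) :
    MonotoneOn (fun u => u ^ β * g u) (Ici M) := by
  have hder : ∀ u ≥ M, HasDerivAt (fun v => v ^ β * g v)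
      (u ^ (β - 1) * (β * g u + u * deriv g u)) u := fun u hu =>
    hasDerivAt_rpow_mul (hM.trans_le hu) (hg u hu)
  refine monotoneOn_of_hasDerivWithinAt_nonneg (convex_Ici M)
    (fun u hu => (hder u hu).continuousAt.continuousWithinAt)
    (fun u hu => (hder u (interior_subset hu)).hasDerivWithinAt) fun u hu => ?_
  rw [interior_Ici] at hu
  exact mul_nonneg (Real.rpow_nonneg (hM.trans hu).le _) (hnonneg u hu.out.le)

lemma eventually_elasticity_nonneg {L : ℝ}
    (hlim : Tendsto (fun x => deriv g x * x / g x) atTop (𝓝 L)) (hL : -β < L)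
    (hgpos : ∀ᶠ x in atTop, 0 < g x) : ∀ᶠ u in atTop, 0 ≤ β * g u + u * deriv g u := by
  filter_upwards [hlim.eventually (eventually_gt_nhds hL), hgpos] with u hu hgu
  rw [lt_div_iff₀ hgu] at hu
  linarith

lemma eventually_monotoneOn_rpow_mul {L a : ℝ} (hgpos : ∀ x ≥ a, 0 < g x)
    (hgdiff : ∀ x ≥ a, DifferentiableAt ℝ g x)
    (hlim : Tendsto (fun x => deriv g x * x / g x) atTop (𝓝 L)) (hL : -β < L) :
    ∀ᶠ M in atTop, MonotoneOn (fun u => u ^ β * g u) (Ici M) := by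
  obtain ⟨M₀, hM₀⟩ :=
    eventually_atTop.1 (eventually_elasticity_nonneg hlim hL (eventually_atTop.2 ⟨a, hgpos⟩))
  filter_upwards [eventually_gt_atTop 0, eventually_ge_atTop a, eventually_ge_atTop M₀]
    with M hM hMa hMM₀
  exact monotoneOn_rpow_mul hM (fun u hu => hgdiff u (hMa.trans hu)) fun u hu =>
    hM₀ u (hMM₀.trans hu)

end PowerTimes

lemma convexOn_Ici_of_hasDerivAt {f f' : ℝ → ℝ} {x₀ : ℝ} (hf : ∀ x ≥ x₀, HasDerivAt f (f' x) x)
    (hmono : MonotoneOn f' (Ici x₀)) : ConvexOn ℝ (Ici x₀) f := by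
  have hint : ∀ x ∈ interior (Ici x₀), HasDerivAt f (f' x) x := fun x hx =>
    hf x (interior_subset hx)
  refine MonotoneOn.convexOn_of_deriv (convex_Ici x₀)
    (fun x hx => (hf x hx).continuousAt.continuousWithinAt)
    (fun x hx => (hint x hx).differentiableAt.differentiableWithinAt) ?_
  exact (hmono.mono interior_subset).congr fun x hx => (hint x hx).deriv.symm

theorem ell_alpha_ultimately_convex_general (g G Ginv : ℝ → ℝ) (lam α : ℝ)
    (hlam : 0 < lam) (hα : lam < α)
    (hgpos : ∀ x ≥ (1:ℝ), 0 < g x)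
    (hgdiff : ∀ x ≥ (1:ℝ), DifferentiableAt ℝ g x)
    (hlim : Filter.Tendsto (fun x => deriv g x * x / g x) Filter.atTop (nhds (1 - lam)))
    (hG : ∀ x ≥ (1:ℝ), G x = ∫ y in (1:ℝ)..x, 1 / g y)
    (hGGinv : ∀ y ≥ (0:ℝ), 1 ≤ Ginv y ∧ G (Ginv y) = y) :
    ∃ x₀ > (0:ℝ), ConvexOn ℝ (Set.Ici x₀) (fun x => Ginv x ^ α) := by
  have hα0 : 0 ≤ α := by linarith
  have hf : ContinuousOn (fun y => 1 / g y) (Ici 1) := continuousOn_const.div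
    (fun x hx => (hgdiff x hx).continuousAt.continuousWithinAt) fun y hy => (hgpos y hy).ne'
  have hGmono : StrictMonoOn G (Ici 1) :=
    strictMonoOn_Ici_of_eqOn_integral hf (fun x hx => one_div_pos.2 (hgpos x hx)) hG
  have hG1 : G 1 = 0 := by rw [hG 1 le_rfl, integral_same]
  have hGmaps : MapsTo G (Ici 1) (Ici 0) := fun x hx =>
    hG1 ▸ hGmono.monotoneOn (mem_Ici.2 le_rfl) hx hx
  have hmaps : MapsTo Ginv (Ici 0) (Ici 1) := fun y hy => (hGGinv y hy).1
  have hinv : LeftInvOn G Ginv (Ici 0) := fun y hy => (hGGinv y hy).2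
  have hGinvmono := (hGmono.strictMonoOn_of_leftInvOn hmaps hinv).monotoneOn
  obtain ⟨M, hψ, hM⟩ := ((eventually_monotoneOn_rpow_mul (β := α - 1) hgpos hgdiff hlim
    (by linarith)).and (eventually_gt_atTop 1)).exists
  have hGM : 0 < G M := hG1 ▸ hGmono (mem_Ici.2 le_rfl) hM.le hM
  have hGinvM : MapsTo Ginv (Ici (G M)) (Ici M) := fun x hx =>
    hGmono.injOn.rightInvOn_of_leftInvOn hinv hGmaps hmaps (mem_Ici.2 hM.le) ▸
      hGinvmono hGM.le (hGM.le.trans hx) hx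
  refine ⟨G M, hGM, convexOn_Ici_of_hasDerivAt
    (f' := fun x => α * (Ginv x ^ (α - 1) * g (Ginv x))) (fun x hx => ?_)
    (fun x hx y hy hxy => mul_le_mul_of_nonneg_left (hψ (hGinvM hx) (hGinvM hy)
      (hGinvmono (hGM.le.trans hx) (hGM.le.trans hy) hxy)) hα0)⟩
  have hu : 1 < Ginv x := hM.trans_le (hGinvM hx)
  have hder := hGmono.hasDerivAt_of_leftInvOn hGmaps hmaps hinv (Ici_mem_nhds (hGM.trans_le hx))
    (Ici_mem_nhds hu) (hasDerivAt_of_eqOn_integral hf hG hu) (one_div_pos.2 (hgpos _ hu.le)).ne'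
  rw [one_div, inv_inv] at hder
  convert hder.rpow_const (p := α) (Or.inl (zero_lt_one.trans hu).ne') using 1
  ring

theorem ell_alpha_ultimately_convex (g G Ginv : ℝ → ℝ) (lam α : ℝ)
    (hlam : 0 < lam) (hα : lam < α)
    (hgpos : ∀ x ≥ (1:ℝ), 0 < g x)
    (hgcont : ContinuousOn g (Set.Ici 1))
    (hgdiff : ∀ x ≥ (1:ℝ), DifferentiableAt ℝ g x)
    (hlim : Filter.Tendsto (fun x => deriv g x * x / g x) Filter.atTop (nhds (1 - lam)))
    (hG : ∀ x ≥ (1:ℝ), G x = ∫ y in (1:ℝ)..x, 1 / g y)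
    (hGinvG : ∀ x ≥ (1:ℝ), Ginv (G x) = x)
    (hGGinv : ∀ y ≥ (0:ℝ), 1 ≤ Ginv y ∧ G (Ginv y) = y) :
    ∃ x₀ > (0:ℝ), ConvexOn ℝ (Set.Ici x₀) (fun x => Ginv x ^ α) :=
  ell_alpha_ultimately_convex_general g G Ginv lam α hlam hα hgpos hgdiff hlim hG hGGinv
end

section
/- Let g : [1,∞) → (0,∞) be continuous and differentiable with g(x) = o(x), lim_{x→∞} g'(x)x/g(x) = 1−λ for some λ > 0, G(x) = ∫₁^x dy/g(y), and ℓ_α(x) = (G⁻¹(x))^α. Suppose lim_{x→∞} x/(G(x)g(x)) = λ. Then for every α > 0 and every r > 0, there exists a constant A_r > 0 such that A_r ℓ_α(x) ≥ ℓ_α(rx) for all x ≥ 1. -/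
theorem ell_alpha_scaling (g G Ginv : ℝ → ℝ) (lam : ℝ) (hlam : 0 < lam)
    (hgpos : ∀ x ≥ (1:ℝ), 0 < g x)
    (hgcont : ContinuousOn g (Set.Ici 1))
    (hgdiff : ∀ x ≥ (1:ℝ), DifferentiableAt ℝ g x)
    (hgo : Filter.Tendsto (fun x => g x / x) Filter.atTop (nhds 0))
    (hlim : Filter.Tendsto (fun x => deriv g x * x / g x) Filter.atTop (nhds (1 - lam)))
    (hG : ∀ x ≥ (1:ℝ), G x = ∫ y in (1:ℝ)..x, 1 / g y)
    (hGinvG : ∀ x ≥ (1:ℝ), Ginv (G x) = x)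
    (hGGinv : ∀ y ≥ (0:ℝ), 1 ≤ Ginv y ∧ G (Ginv y) = y)
    (hGg : Filter.Tendsto (fun x => x / (G x * g x)) Filter.atTop (nhds lam)) :
    ∀ α > (0:ℝ), ∀ r > (0:ℝ), ∃ A > (0:ℝ), ∀ x ≥ (1:ℝ),
      Ginv (r * x) ^ α ≤ A * Ginv x ^ α := by
  intro α hα r hr
  -- continuity of 1/g on [1,∞)
  have hcont1 : ContinuousOn (fun y => 1 / g y) (Set.Ici (1:ℝ)) :=
    continuousOn_const.div hgcont (fun y hy => (hgpos y hy).ne')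
  -- interval integrability of 1/g
  have hint : ∀ a b : ℝ, 1 ≤ a → 1 ≤ b →
      IntervalIntegrable (fun y => 1 / g y) MeasureTheory.volume a b := by
    intro a b ha hb
    apply (hcont1.mono ?_).intervalIntegrable
    intro y hy
    rcases Set.mem_uIcc.mp hy with h | h
    · exact le_trans ha h.1
    · exact le_trans hb h.1
  -- G splits
  have hGsplit : ∀ a b : ℝ, 1 ≤ a → a ≤ b → G b = G a + ∫ y in a..b, 1 / g y := by
    intro a b ha hab
    rw [hG a ha, hG b (ha.trans hab)]
    exact (intervalIntegral.integral_add_adjacent_intervals (hint 1 a le_rfl ha)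
      (hint a b ha (ha.trans hab))).symm
  -- strict monotonicity of G
  have hGmono : ∀ a b : ℝ, 1 ≤ a → a < b → G a < G b := by
    intro a b ha hab
    rw [hGsplit a b ha hab.le]
    have hpos : 0 < ∫ y in a..b, 1 / g y := by
      apply intervalIntegral.intervalIntegral_pos_of_pos_on
        (hint a b ha (ha.trans hab.le)) _ hab
      intro y hy
      exact one_div_pos.mpr (hgpos y (ha.trans hy.1.le))
    linarith
  have hGmono' : ∀ a b : ℝ, 1 ≤ a → a ≤ b → G a ≤ G b := by
    intro a b ha hab
    rcases eq_or_lt_of_le hab with rfl | h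
    · exact le_rfl
    · exact (hGmono a b ha h).le
  -- "inverse" comparison: G v ≤ G w → v ≤ w for v, w ≥ 1
  have hle : ∀ v w : ℝ, 1 ≤ v → 1 ≤ w → G v ≤ G w → v ≤ w := by
    intro v w hv hw h
    by_contra hc
    push_neg at hc
    exact absurd h (not_le.mpr (hGmono w v hw hc))
  -- Ginv monotone on [0,∞)
  have hGinvmono : ∀ a b : ℝ, 0 ≤ a → a ≤ b → Ginv a ≤ Ginv b := by
    intro a b ha hab
    have h1 := hGGinv a ha
    have h2 := hGGinv b (ha.trans hab)
    exact hle _ _ h1.1 h2.1 (by rw [h1.2, h2.2]; exact hab)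
  -- threshold where x/(G x * g x) > lam/2
  have hev : ∀ᶠ y in Filter.atTop, lam / 2 < y / (G y * g y) :=
    hGg.eventually (eventually_gt_nhds (by linarith))
  obtain ⟨X₁, hX₁⟩ := Filter.eventually_atTop.mp hev
  set X₀ : ℝ := max X₁ 1 with hX₀def
  have hX₀1 : (1:ℝ) ≤ X₀ := le_max_right _ _
  -- pointwise bound 1/g y ≥ (lam/2) G y / y for y ≥ X₀
  have hpt : ∀ y : ℝ, X₀ ≤ y → lam / 2 * G y / y ≤ 1 / g y := by
    intro y hy
    have hy1 : (1:ℝ) ≤ y := hX₀1.trans hy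
    have hgy : 0 < g y := hgpos y hy1
    have hrat : lam / 2 < y / (G y * g y) := hX₁ y ((le_max_left _ _).trans hy)
    have hGy0 : 0 ≤ G y := by
      have := hGmono' 1 y le_rfl hy1
      rw [hG 1 le_rfl, intervalIntegral.integral_same] at this
      exact this
    have hGy : 0 < G y := by
      rcases eq_or_lt_of_le hGy0 with h | h
      · exfalso
        rw [← h, zero_mul, div_zero] at hrat
        linarith
      · exact h
    have hyp : 0 < y := lt_of_lt_of_le zero_lt_one hy1
    rw [div_le_div_iff₀ hyp hgy]
    have := (lt_div_iff₀ (mul_pos hGy hgy)).mp hrat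
    nlinarith
  -- the constant C
  set C : ℝ := max 1 (Real.exp (2 * (r - 1) / lam)) with hCdef
  have hC1 : (1:ℝ) ≤ C := le_max_left _ _
  have hlogC : 2 * (r - 1) / lam ≤ Real.log C := by
    calc 2 * (r - 1) / lam = Real.log (Real.exp (2 * (r - 1) / lam)) := (Real.log_exp _).symm
    _ ≤ Real.log C := Real.log_le_log (Real.exp_pos _) (le_max_right _ _)
  have hlogC0 : 0 ≤ Real.log C := Real.log_nonneg hC1
  have hrC : r ≤ 1 + lam / 2 * Real.log C := by
    have : r - 1 ≤ lam / 2 * Real.log C := by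
      have h2 : lam / 2 * (2 * (r - 1) / lam) ≤ lam / 2 * Real.log C :=
        mul_le_mul_of_nonneg_left hlogC (by linarith)
      have h3 : lam / 2 * (2 * (r - 1) / lam) = r - 1 := by
        field_simp
      linarith [h3 ▸ h2]
    linarith
  -- tail bound: for u ≥ X₀, r * G u ≤ G (C * u)
  have hkey : ∀ u : ℝ, X₀ ≤ u → 0 < G u → r * G u ≤ G (C * u) := by
    intro u hu hGu
    have hu1 : (1:ℝ) ≤ u := hX₀1.trans hu
    have hup : 0 < u := lt_of_lt_of_le zero_lt_one hu1
    have huCu : u ≤ C * u := le_mul_of_one_le_left hup.le hC1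
    rw [hGsplit u (C * u) hu1 huCu]
    have hmono : (∫ y in u..(C*u), lam / 2 * G u * (1 / y)) ≤ ∫ y in u..(C*u), 1 / g y := by
      apply intervalIntegral.integral_mono_on huCu _ (hint u (C*u) hu1 (hu1.trans huCu))
      · intro y hy
        have hy1 : (1:ℝ) ≤ y := hu1.trans hy.1
        have hyp : 0 < y := lt_of_lt_of_le zero_lt_one hy1
        have hGuy : G u ≤ G y := hGmono' u y hu1 hy.1
        calc lam / 2 * G u * (1 / y) ≤ lam / 2 * G y * (1 / y) := by
              apply mul_le_mul_of_nonneg_right _ (by positivity)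
              apply mul_le_mul_of_nonneg_left hGuy (by linarith)
        _ = lam / 2 * G y / y := by ring
        _ ≤ 1 / g y := hpt y (hu.trans hy.1)
      · apply IntervalIntegrable.const_mul
        apply ContinuousOn.intervalIntegrable
        apply continuousOn_const.div continuousOn_id
        intro y hy
        rcases Set.mem_uIcc.mp hy with h | h
        · exact ne_of_gt (lt_of_lt_of_le hup h.1)
        · exact ne_of_gt (lt_of_lt_of_le (lt_of_lt_of_le hup huCu) h.1)
    have hval : (∫ y in u..(C*u), lam / 2 * G u * (1 / y)) = lam / 2 * G u * Real.log C := by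
      rw [intervalIntegral.integral_const_mul, integral_one_div]
      · congr 1
        rw [mul_div_assoc, div_self hup.ne', mul_one]
      · intro h0
        rcases Set.mem_uIcc.mp h0 with h | h
        · linarith [h.1]
        · nlinarith [h.1]
    nlinarith [hval ▸ hmono]
  -- compact-range constant
  set x₀ : ℝ := max 1 (G X₀) with hx₀def
  have hx₀1 : (1:ℝ) ≤ x₀ := le_max_left _ _
  have hrx₀ : (0:ℝ) ≤ r * x₀ := by positivity
  set M : ℝ := Ginv (r * x₀) with hMdef
  have hM1 : (1:ℝ) ≤ M := (hGGinv _ hrx₀).1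
  -- overall constant
  set K : ℝ := max C M with hKdef
  have hK1 : (1:ℝ) ≤ K := hC1.trans (le_max_left _ _)
  have hK0 : (0:ℝ) < K := lt_of_lt_of_le zero_lt_one hK1
  refine ⟨K ^ α, Real.rpow_pos_of_pos hK0 α, ?_⟩
  intro x hx
  have hx0 : (0:ℝ) ≤ x := le_trans zero_le_one hx
  have hrx : (0:ℝ) ≤ r * x := by positivity
  have hGinvx1 : (1:ℝ) ≤ Ginv x := (hGGinv x hx0).1
  have hGinvrx1 : (1:ℝ) ≤ Ginv (r * x) := (hGGinv _ hrx).1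
  -- main claim: Ginv (r*x) ≤ K * Ginv x
  have hmain : Ginv (r * x) ≤ K * Ginv x := by
    rcases le_total x x₀ with hcase | hcase
    · -- small x
      have h1 : Ginv (r * x) ≤ M := hGinvmono _ _ hrx (by nlinarith)
      calc Ginv (r * x) ≤ M := h1
      _ = M * 1 := (mul_one M).symm
      _ ≤ K * Ginv x := mul_le_mul (le_max_right _ _) hGinvx1 zero_le_one hK0.le
    · -- large x
      set u : ℝ := Ginv x with hudef
      have hu1 : (1:ℝ) ≤ u := hGinvx1
      have hGu : G u = x := (hGGinv x hx0).2
      have huX₀ : X₀ ≤ u := by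
        by_contra hc
        push_neg at hc
        have := hGmono u X₀ hu1 hc
        rw [hGu] at this
        have : x < G X₀ := this
        have : G X₀ ≤ x := le_trans (le_max_right 1 (G X₀)) hcase
        linarith
      have hGup : 0 < G u := by rw [hGu]; linarith
      have hrGu : r * x ≤ G (C * u) := by
        have := hkey u huX₀ hGup
        rwa [hGu] at this
      have hCu1 : (1:ℝ) ≤ C * u := le_trans hC1 (le_mul_of_one_le_right (by linarith) hu1)
      have hv : Ginv (r * x) ≤ C * u := by
        apply hle _ _ hGinvrx1 hCu1
        rw [(hGGinv _ hrx).2]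
        exact hrGu
      calc Ginv (r * x) ≤ C * u := hv
      _ ≤ K * u := mul_le_mul_of_nonneg_right (le_max_left _ _) (by linarith)
  -- conclude with rpow
  have h0 : (0:ℝ) ≤ Ginv (r * x) := by linarith
  calc Ginv (r * x) ^ α ≤ (K * Ginv x) ^ α :=
        Real.rpow_le_rpow h0 hmain hα.le
  _ = K ^ α * Ginv x ^ α := Real.mul_rpow hK0.le (by linarith)
end
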